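/- arXiv:2512.23543 — 2 statements merged into one kernel-verified Lean document; each statement's English description precedes it below -/
import Mathlib

section
/- Let J be an adapted complex structure on a finite simple graph G with at least one edge, and let G_b be the associated basic subgraph (the unique J-invariant spanning basic subgraph, whose edges are the distinguished edges of G). Then the complex structure J on 𝔫_G is 3-step nilpotent if and only if G_b contains at least one component isomorphic to A₂ whose isolated vertex (isolated in G_b) has positive degree in G. -/
/-!  Framework: the 2-step nilpotent Lie algebra `𝔫_G` associated to a finite simple
graph `G` (Dani–Mainkar construction), and adapted complex structures on it. -/

open scoped BigOperators
set_option linter.unusedSectionVars false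

namespace GraphLie

variable {V : Type*} [Fintype V] [LinearOrder V]

/-- The underlying real vector space of the Lie algebra `𝔫_G` associated to a graph `G`:
real-valued functions on its basis `V ⊕ G.edgeSet` (vertices and edges). -/
abbrev Niln (G : SimpleGraph V) : Type _ := (V ⊕ G.edgeSet) → ℝ

variable (G : SimpleGraph V) [DecidableRel G.Adj]

/-- The basis vector of `𝔫_G` corresponding to the vertex `v`. -/
noncomputable def vtx (v : V) : Niln G := Pi.single (Sum.inl v) 1

/-- The basis vector of `𝔫_G` corresponding to the edge `e`. -/
noncomputable def edg (e : G.edgeSet) : Niln G := Pi.single (Sum.inr e) 1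

/-- The basis vector of `𝔫_G` corresponding to a vertex or an edge. -/
noncomputable def basisVec (b : V ⊕ G.edgeSet) : Niln G := Pi.single b 1

/-- The bracket of two vertex generators: for adjacent vertices `i < j` (with respect to
the chosen labeling of the vertices) `[v_i, v_j] = e_{i,j}` and `[v_j, v_i] = -e_{i,j}`;
non-adjacent vertices commute. -/
noncomputable def bracketVtx (i j : V) : Niln G :=
  if h : G.Adj i j then
    (if i < j then edg G ⟨s(i, j), G.mem_edgeSet.mpr h⟩
     else - edg G ⟨s(i, j), G.mem_edgeSet.mpr h⟩)
  else 0

/-- The Lie bracket of `𝔫_G`, extended bilinearly from the generators; all the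
edge generators are central. -/
noncomputable def bracket (x y : Niln G) : Niln G :=
  ∑ i : V, ∑ j : V, (x (Sum.inl i) * y (Sum.inl j)) • bracketVtx G i j

/-- An adapted complex structure on the graph `G`: a linear endomorphism `J` of `𝔫_G`
with `J ∘ J = -id`, whose Nijenhuis tensor vanishes, and which sends each basis vector
(vertex or edge) to plus or minus a basis vector. -/
structure AdaptedCS : Type _ where
  J : Niln G →ₗ[ℝ] Niln G
  j_squared : ∀ x, J (J x) = -x
  integrable : ∀ x y,
    bracket G x y + J (bracket G (J x) y + bracket G x (J y)) - bracket G (J x) (J y) = 0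
  adapted : ∀ b : V ⊕ G.edgeSet,
    (∃ b', J (basisVec G b) = basisVec G b') ∨ (∃ b', J (basisVec G b) = - basisVec G b')

variable {G}

/-- An edge of `G` joining vertices `v` and `w` is distinguished if `Jv = w` or `Jw = v`. -/
def AdaptedCS.Distinguished (Jc : AdaptedCS G) (e : G.edgeSet) : Prop :=
  ∃ v w : V, (e : Sym2 V) = s(v, w) ∧
    (Jc.J (vtx G v) = vtx G w ∨ Jc.J (vtx G w) = vtx G v)

end GraphLie

namespace GraphLie

variable {V : Type*} [Fintype V] [LinearOrder V]

/-- The `J`-compatible ascending series of `(𝔫_G, J)`: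
`𝔞₀ = 0` and `𝔞_{k+1} = {x : [x, 𝔫_G] ⊆ 𝔞_k and [Jx, 𝔫_G] ⊆ 𝔞_k}`. -/
noncomputable def aSeries {G : SimpleGraph V} [DecidableRel G.Adj] (Jc : AdaptedCS G) :
    ℕ → Set (Niln G)
  | 0 => {0}
  | (k + 1) =>
      {x | (∀ y, bracket G x y ∈ aSeries Jc k) ∧ (∀ y, bracket G (Jc.J x) y ∈ aSeries Jc k)}

/-- `J` is `k`-step nilpotent if `k` is the smallest index with `𝔞_k = 𝔫_G`. -/
def AdaptedCS.IsStepNilpotent {G : SimpleGraph V} [DecidableRel G.Adj]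
    (Jc : AdaptedCS G) (k : ℕ) : Prop :=
  aSeries Jc k = Set.univ ∧ ∀ m < k, aSeries Jc m ≠ Set.univ


section Aux
variable {G : SimpleGraph V} [DecidableRel G.Adj]

lemma basisVec_apply (b c : V ⊕ G.edgeSet) : basisVec G b c = if c = b then 1 else 0 := by
  simp [basisVec, Pi.single_apply]

lemma edg_apply_inl (e : G.edgeSet) (i : V) : edg G e (Sum.inl i) = 0 := by
  simp [edg, Pi.single_apply]

lemma edg_apply_inr (e f : G.edgeSet) : edg G e (Sum.inr f) = if f = e then 1 else 0 := by
  simp [edg, Pi.single_apply]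

lemma vtx_apply_inl (v i : V) : vtx G v (Sum.inl i) = if i = v then 1 else 0 := by
  simp [vtx, Pi.single_apply]

lemma bracketVtx_adj {i j : V} (h : G.Adj i j) :
    bracketVtx G i j = (if i < j then (1:ℝ) else -1) • edg G ⟨s(i,j), G.mem_edgeSet.mpr h⟩ := by
  rw [bracketVtx, dif_pos h]
  split_ifs <;> simp

lemma bracketVtx_not_adj {i j : V} (h : ¬ G.Adj i j) : bracketVtx G i j = 0 := by
  rw [bracketVtx, dif_neg h]

lemma bracketVtx_apply_inl (i j v : V) : bracketVtx G i j (Sum.inl v) = 0 := by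
  by_cases h : G.Adj i j
  · rw [bracketVtx_adj h]; simp [edg_apply_inl]
  · rw [bracketVtx_not_adj h]; rfl

lemma bracket_apply (x y : Niln G) (c : V ⊕ G.edgeSet) :
    bracket G x y c = ∑ i : V, ∑ j : V, (x (Sum.inl i) * y (Sum.inl j)) * bracketVtx G i j c := by
  simp [bracket, Finset.sum_apply, smul_eq_mul]

lemma bracket_apply_inl (x y : Niln G) (v : V) : bracket G x y (Sum.inl v) = 0 := by
  simp [bracket_apply, bracketVtx_apply_inl]

lemma bracket_zero_left {x : Niln G} (h : ∀ i, x (Sum.inl i) = 0) (y : Niln G) :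
    bracket G x y = 0 := by
  unfold bracket
  refine Finset.sum_eq_zero fun i _ => Finset.sum_eq_zero fun j _ => ?_
  simp [h i]

lemma bracket_zero_right {y : Niln G} (h : ∀ i, y (Sum.inl i) = 0) (x : Niln G) :
    bracket G x y = 0 := by
  unfold bracket
  refine Finset.sum_eq_zero fun i _ => Finset.sum_eq_zero fun j _ => ?_
  simp [h j]

lemma bracket_vtx_vtx (i j : V) : bracket G (vtx G i) (vtx G j) = bracketVtx G i j := by
  unfold bracket
  rw [Finset.sum_eq_single i]
  · rw [Finset.sum_eq_single j]
    · simp [vtx_apply_inl]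
    · intro q _ hq; simp [vtx_apply_inl, hq]
    · intro h; exact absurd (Finset.mem_univ j) h
  · intro p _ hp
    refine Finset.sum_eq_zero fun q _ => ?_
    simp [vtx_apply_inl, hp]
  · intro h; exact absurd (Finset.mem_univ i) h

set_option maxRecDepth 4000 in
lemma bracket_smul_left (c : ℝ) (x y : Niln G) :
    bracket G (c • x) y = c • bracket G x y := by
  funext p
  simp only [Pi.smul_apply, bracket_apply, smul_eq_mul, Finset.mul_sum]
  exact Finset.sum_congr rfl fun i _ => Finset.sum_congr rfl fun j _ => by ring

end Aux

section Sig
variable {G : SimpleGraph V} [DecidableRel G.Adj] (Jc : AdaptedCS G)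

lemma exists_pair (b : V ⊕ G.edgeSet) :
    ∃ p : (V ⊕ G.edgeSet) × ℝ, (p.2 = 1 ∨ p.2 = -1) ∧
      Jc.J (basisVec G b) = p.2 • basisVec G p.1 := by
  rcases Jc.adapted b with ⟨b', h⟩ | ⟨b', h⟩
  · exact ⟨(b', 1), Or.inl rfl, by simpa using h⟩
  · exact ⟨(b', -1), Or.inr rfl, by simpa using h⟩

noncomputable def sig (b : V ⊕ G.edgeSet) : V ⊕ G.edgeSet :=
  (Classical.choose (exists_pair Jc b)).1

noncomputable def eps (b : V ⊕ G.edgeSet) : ℝ :=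
  (Classical.choose (exists_pair Jc b)).2

lemma eps_cases (b : V ⊕ G.edgeSet) : eps Jc b = 1 ∨ eps Jc b = -1 :=
  (Classical.choose_spec (exists_pair Jc b)).1

lemma J_basis (b : V ⊕ G.edgeSet) :
    Jc.J (basisVec G b) = eps Jc b • basisVec G (sig Jc b) :=
  (Classical.choose_spec (exists_pair Jc b)).2

lemma eps_ne (b : V ⊕ G.edgeSet) : eps Jc b ≠ 0 := by
  rcases eps_cases Jc b with h | h <;> rw [h] <;> norm_num

lemma JJ_basis (b : V ⊕ G.edgeSet) :
    (eps Jc b * eps Jc (sig Jc b)) • basisVec G (sig Jc (sig Jc b)) = - basisVec G b := by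
  have h := Jc.j_squared (basisVec G b)
  rw [J_basis, map_smul, J_basis, smul_smul] at h
  exact h

lemma sig_sig (b : V ⊕ G.edgeSet) : sig Jc (sig Jc b) = b := by
  have h := congrFun (JJ_basis Jc b) b
  simp only [Pi.neg_apply, Pi.smul_apply, basisVec_apply] at h
  by_contra hne
  rw [if_neg (fun hh : (b:V ⊕ G.edgeSet) = sig Jc (sig Jc b) => hne hh.symm)] at h
  simp [eps_ne] at h

lemma eps_mul (b : V ⊕ G.edgeSet) : eps Jc b * eps Jc (sig Jc b) = -1 := by
  have h := congrFun (JJ_basis Jc b) b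
  rw [sig_sig] at h
  simp only [Pi.neg_apply, Pi.smul_apply, basisVec_apply, if_pos rfl] at h
  simpa using h

lemma sig_ne (b : V ⊕ G.edgeSet) : sig Jc b ≠ b := by
  intro h
  have := eps_mul Jc b
  rw [h] at this
  rcases eps_cases Jc b with hh | hh <;> rw [hh] at this <;> norm_num at this

lemma sig_eq_of_J (b b' : V ⊕ G.edgeSet) (s : ℝ) (_hs : s ≠ 0)
    (h : Jc.J (basisVec G b) = s • basisVec G b') : sig Jc b = b' := by
  rw [J_basis] at h
  have h2 := congrFun h (sig Jc b)
  rw [Pi.smul_apply, Pi.smul_apply, basisVec_apply, basisVec_apply, if_pos rfl] at h2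
  by_contra hne
  rw [if_neg (fun hh : sig Jc b = b' => hne hh)] at h2
  simp [eps_ne Jc b] at h2

set_option maxRecDepth 4000 in
lemma J_apply (x : Niln G) (c : V ⊕ G.edgeSet) :
    Jc.J x c = eps Jc (sig Jc c) * x (sig Jc c) := by
  have hx : x = ∑ b : V ⊕ G.edgeSet, x b • basisVec G b := by
    funext d
    rw [Finset.sum_apply]
    rw [Finset.sum_eq_single d]
    · simp [basisVec_apply]
    · intro b _ hb; simp [basisVec_apply, Ne.symm hb]
    · intro h; exact absurd (Finset.mem_univ d) h
  conv_lhs => rw [hx]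
  rw [map_sum]
  simp only [map_smul, J_basis]
  rw [Finset.sum_apply]
  rw [Finset.sum_eq_single (sig Jc c)]
  · rw [sig_sig]
    simp [basisVec_apply, smul_smul]
    ring
  · intro b _ hb
    have : sig Jc b ≠ c := fun h => hb (by rw [← h, sig_sig])
    simp [basisVec_apply, this, Ne.symm this]
  · intro h; exact absurd (Finset.mem_univ _) h

end Sig

section Facts
variable {G : SimpleGraph V} [DecidableRel G.Adj] (Jc : AdaptedCS G)

lemma edge_repr (e : G.edgeSet) : ∃ a b, G.Adj a b ∧ (e : Sym2 V) = s(a, b) := by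
  obtain ⟨e, he⟩ := e
  induction e with
  | _ a b => exact ⟨a, b, G.mem_edgeSet.mp he, rfl⟩

lemma basisVec_inr_inl (f : G.edgeSet) (i : V) : basisVec G (Sum.inr f) (Sum.inl i) = 0 := by
  rw [basisVec_apply]; simp

lemma factA1 {v a b : V} {e f : G.edgeSet} (hadj : G.Adj a b)
    (hv : sig Jc (Sum.inl v) = Sum.inr e) (he : (e : Sym2 V) = s(a, b))
    (hf : sig Jc (Sum.inl a) = Sum.inr f) : False := by
  have hJa : Jc.J (vtx G a) = eps Jc (Sum.inl a) • basisVec G (Sum.inr f) := by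
    rw [show vtx G a = basisVec G (Sum.inl a) from rfl, J_basis, hf]
  have hzero : ∀ i, (Jc.J (vtx G a)) (Sum.inl i) = 0 := by
    intro i; rw [hJa, Pi.smul_apply, basisVec_inr_inl, smul_zero]
  have h1 : bracket G (Jc.J (vtx G a)) (vtx G b) = 0 := bracket_zero_left hzero _
  have h2 : bracket G (Jc.J (vtx G a)) (Jc.J (vtx G b)) = 0 := bracket_zero_left hzero _
  have hint := Jc.integrable (vtx G a) (vtx G b)
  rw [h1, h2, zero_add, sub_zero, bracket_vtx_vtx] at hint
  set w := bracket G (vtx G a) (Jc.J (vtx G b)) with hw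
  have h3 : Jc.J (bracketVtx G a b) + Jc.J (Jc.J w) = 0 := by
    rw [← map_add, hint, map_zero]
  rw [Jc.j_squared w] at h3
  have h4 : Jc.J (bracketVtx G a b) = w := by rwa [add_neg_eq_zero] at h3
  have h5 := congrFun h4 (Sum.inl v)
  have hwv : w (Sum.inl v) = 0 := bracket_apply_inl _ _ _
  have hee : (⟨s(a, b), G.mem_edgeSet.mpr hadj⟩ : G.edgeSet) = e := Subtype.ext he.symm
  rw [hwv, bracketVtx_adj hadj, hee, map_smul, Pi.smul_apply, J_apply, hv] at h5
  rw [edg_apply_inr, if_pos rfl, mul_one] at h5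
  have := eps_ne Jc (Sum.inr e)
  split_ifs at h5 <;> simp_all

lemma sig_inl_of_adj {v a b : V} {e : G.edgeSet} (hadj : G.Adj a b)
    (hv : sig Jc (Sum.inl v) = Sum.inr e) (he : (e : Sym2 V) = s(a, b)) :
    ∃ c, sig Jc (Sum.inl a) = Sum.inl c := by
  rcases h : sig Jc (Sum.inl a) with c | f
  · exact ⟨c, rfl⟩
  · exact absurd (factA1 Jc hadj hv he h) (fun x => x)

end Facts

section Facts2
variable {G : SimpleGraph V} [DecidableRel G.Adj] (Jc : AdaptedCS G)

lemma bracket_smul_right (c : ℝ) (x y : Niln G) :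
    bracket G x (c • y) = c • bracket G x y := by
  funext p
  simp only [Pi.smul_apply, bracket_apply, smul_eq_mul, Finset.mul_sum]
  exact Finset.sum_congr rfl fun i _ => Finset.sum_congr rfl fun j _ => by ring

lemma distinguished_of_sig {v : V} {e : G.edgeSet} (hv : sig Jc (Sum.inl v) = Sum.inr e) :
    Jc.Distinguished e := by
  obtain ⟨a, b, hadj, he⟩ := edge_repr e
  obtain ⟨c, hc⟩ := sig_inl_of_adj Jc hadj hv he
  obtain ⟨d, hd⟩ := sig_inl_of_adj Jc hadj.symm hv (he.trans (Sym2.eq_swap))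
  have hJa : Jc.J (vtx G a) = eps Jc (Sum.inl a) • vtx G c := by
    rw [show vtx G a = basisVec G (Sum.inl a) from rfl, J_basis, hc]; rfl
  have hJb : Jc.J (vtx G b) = eps Jc (Sum.inl b) • vtx G d := by
    rw [show vtx G b = basisVec G (Sum.inl b) from rfl, J_basis, hd]; rfl
  have hint := Jc.integrable (vtx G a) (vtx G b)
  rw [hJa, hJb, bracket_smul_left, bracket_smul_right, bracket_smul_left,
    bracket_smul_right, bracket_vtx_vtx, bracket_vtx_vtx, bracket_vtx_vtx,
    bracket_vtx_vtx] at hint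
  have h := congrFun hint (Sum.inr e)
  have hsige : sig Jc (Sum.inr e) = Sum.inl v := by rw [← hv, sig_sig]
  have hee : (⟨s(a, b), G.mem_edgeSet.mpr hadj⟩ : G.edgeSet) = e := Subtype.ext he.symm
  rw [Pi.zero_apply, Pi.sub_apply, Pi.add_apply, J_apply, hsige] at h
  simp only [Pi.add_apply, Pi.smul_apply, bracketVtx_apply_inl, smul_zero, add_zero,
    mul_zero, smul_eq_mul] at h
  rw [bracketVtx_adj hadj, hee, Pi.smul_apply, edg_apply_inr, if_pos rfl] at h
  by_cases hcd : G.Adj c d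
  · rw [bracketVtx_adj hcd, Pi.smul_apply, edg_apply_inr] at h
    by_cases heq : e = (⟨s(c, d), G.mem_edgeSet.mpr hcd⟩ : G.edgeSet)
    · have hsym : s(a, b) = s(c, d) := by rw [← he, heq]
      rcases Sym2.eq_iff.mp hsym with ⟨h1, h2⟩ | ⟨h1, h2⟩
      · exfalso
        exact sig_ne Jc (Sum.inl a) (by rw [hc, ← h1])
      · -- a = d, b = c
        refine ⟨a, b, he, ?_⟩
        have hcb : c = b := h2.symm
        have hda : d = a := h1.symm
        have hprod : eps Jc (Sum.inl a) * eps Jc (Sum.inl b) = -1 := by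
          have := eps_mul Jc (Sum.inl a)
          rwa [hc, hcb] at this
        rcases eps_cases Jc (Sum.inl a) with h1' | h1'
        · left
          rw [hJa, h1', one_smul, hcb]
        · right
          have h2' : eps Jc (Sum.inl b) = 1 := by
            rw [h1'] at hprod; linarith
          rw [hJb, h2', one_smul, hda]
    · exfalso
      rw [if_neg heq] at h
      split_ifs at h <;> norm_num at h
  · exfalso
    rw [bracketVtx_not_adj hcd, Pi.zero_apply] at h
    split_ifs at h <;> norm_num at h

lemma factC' {w q u : V} {f : G.edgeSet} (hf : sig Jc (Sum.inr f) = Sum.inl w)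
    (hadj : G.Adj w q) {g : G.edgeSet} (hg : (g : Sym2 V) = s(w, q))
    (hgu : sig Jc (Sum.inr g) = Sum.inl u) : False := by
  have hu : sig Jc (Sum.inl u) = Sum.inr g := by rw [← hgu, sig_sig]
  have hw : sig Jc (Sum.inl w) = Sum.inr f := by rw [← hf, sig_sig]
  exact factA1 Jc hadj hu hg hw

end Facts2

section Series
variable {G : SimpleGraph V} [DecidableRel G.Adj] (Jc : AdaptedCS G)

lemma aSeries_zero : aSeries Jc 0 = {0} := rfl

lemma aSeries_succ (k : ℕ) : aSeries Jc (k + 1) =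
    {x | (∀ y, bracket G x y ∈ aSeries Jc k) ∧ (∀ y, bracket G (Jc.J x) y ∈ aSeries Jc k)} := rfl

lemma bracket_zero_left' {x : Niln G} (h : ∀ i j, G.Adj i j → x (Sum.inl i) = 0)
    (y : Niln G) : bracket G x y = 0 := by
  unfold bracket
  refine Finset.sum_eq_zero fun i _ => Finset.sum_eq_zero fun j _ => ?_
  by_cases hij : G.Adj i j
  · rw [h i j hij, zero_mul, zero_smul]
  · rw [bracketVtx_not_adj hij, smul_zero]

lemma mem_a1 {z : Niln G} (h1 : ∀ i, z (Sum.inl i) = 0)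
    (h2 : ∀ i j, G.Adj i j → (Jc.J z) (Sum.inl i) = 0) : z ∈ aSeries Jc 1 := by
  rw [aSeries_succ]
  exact ⟨fun y => Set.mem_singleton_iff.mpr (bracket_zero_left h1 y),
    fun y => Set.mem_singleton_iff.mpr (bracket_zero_left' h2 y)⟩

lemma zero_mem_a1 : (0 : Niln G) ∈ aSeries Jc 1 :=
  mem_a1 Jc (fun _ => rfl) (by intro i j _; rw [map_zero]; rfl)

lemma mem_a2_of_edge {z : Niln G} (hz : ∀ i, z (Sum.inl i) = 0) : z ∈ aSeries Jc 2 := by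
  rw [aSeries_succ]
  refine ⟨fun y => ?_, fun y => ?_⟩
  · rw [bracket_zero_left hz y]; exact zero_mem_a1 Jc
  · refine mem_a1 Jc (fun i => bracket_apply_inl _ _ _) ?_
    intro i j hij
    rw [J_apply]
    rcases hsi : sig Jc (Sum.inl i) with p | g
    · rw [bracket_apply_inl, mul_zero]
    · suffices hsuf : bracket G (Jc.J z) y (Sum.inr g) = 0 by rw [hsuf, mul_zero]
      rw [bracket_apply]
      refine Finset.sum_eq_zero fun p _ => Finset.sum_eq_zero fun q _ => ?_
      by_cases hpq : G.Adj p q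
      · by_cases hge : g = (⟨s(p, q), G.mem_edgeSet.mpr hpq⟩ : G.edgeSet)
        · have hJz : (Jc.J z) (Sum.inl p) = 0 := by
            rw [J_apply]
            rcases hsp : sig Jc (Sum.inl p) with p' | f
            · rw [hz p', mul_zero]
            · exfalso
              have hfp : sig Jc (Sum.inr f) = Sum.inl p := by rw [← hsp, sig_sig]
              have hgi : sig Jc (Sum.inr g) = Sum.inl i := by rw [← hsi, sig_sig]
              exact factC' Jc hfp hpq (by rw [hge]) hgi
          rw [hJz, zero_mul, zero_mul]
        · rw [bracketVtx_adj hpq, Pi.smul_apply, edg_apply_inr, if_neg hge, smul_zero, mul_zero]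
      · rw [bracketVtx_not_adj hpq, Pi.zero_apply, mul_zero]

lemma a3_univ : aSeries Jc 3 = Set.univ := by
  ext x
  simp only [Set.mem_univ, iff_true]
  rw [aSeries_succ]
  exact ⟨fun y => mem_a2_of_edge Jc (fun i => bracket_apply_inl _ _ _),
    fun y => mem_a2_of_edge Jc (fun i => bracket_apply_inl _ _ _)⟩

lemma bracket_eval_edge {x : Niln G} {v j : V} (hadj : G.Adj v j) :
    bracket G x (vtx G j) (Sum.inr ⟨s(v, j), G.mem_edgeSet.mpr hadj⟩)
      = x (Sum.inl v) * (if v < j then (1:ℝ) else -1) := by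
  set g : G.edgeSet := ⟨s(v, j), G.mem_edgeSet.mpr hadj⟩ with hg
  rw [bracket_apply]
  have inner : ∀ p : V,
      (∑ q : V, x (Sum.inl p) * vtx G j (Sum.inl q) * bracketVtx G p q (Sum.inr g))
        = x (Sum.inl p) * bracketVtx G p j (Sum.inr g) := by
    intro p
    rw [Finset.sum_eq_single j]
    · rw [vtx_apply_inl, if_pos rfl, mul_one]
    · intro q _ hq; rw [vtx_apply_inl, if_neg hq, mul_zero, zero_mul]
    · intro hj; exact absurd (Finset.mem_univ j) hj
  simp only [inner]
  rw [Finset.sum_eq_single v]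
  · rw [bracketVtx_adj hadj, Pi.smul_apply, edg_apply_inr, if_pos hg, smul_eq_mul]
    ring
  · intro p _ hp
    by_cases hpj : G.Adj p j
    · have hneq : g ≠ (⟨s(p, j), G.mem_edgeSet.mpr hpj⟩ : G.edgeSet) := by
        intro hh
        have : s(v, j) = s(p, j) := congrArg Subtype.val (hg ▸ hh)
        rcases Sym2.eq_iff.mp this with ⟨h1, _⟩ | ⟨h1, _⟩
        · exact hp h1.symm
        · exact hadj.ne h1
      rw [bracketVtx_adj hpj, Pi.smul_apply, edg_apply_inr, if_neg hneq, smul_zero, mul_zero]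
    · rw [bracketVtx_not_adj hpj, Pi.zero_apply, mul_zero]
  · intro h; exact absurd (Finset.mem_univ v) h

lemma bracket_ne_zero {x : Niln G} {v j : V} (hadj : G.Adj v j)
    (hx : x (Sum.inl v) ≠ 0) : bracket G x (vtx G j) ≠ 0 := by
  intro h0
  have h := congrFun h0 (Sum.inr ⟨s(v, j), G.mem_edgeSet.mpr hadj⟩)
  rw [bracket_eval_edge hadj, Pi.zero_apply] at h
  rcases mul_eq_zero.mp h with h | h
  · exact hx h
  · split_ifs at h <;> norm_num at h

lemma factB {v : V} {e : G.edgeSet} (hv : sig Jc (Sum.inl v) = Sum.inr e)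
    (f : G.edgeSet) (hf : Jc.Distinguished f) : v ∉ (f : Sym2 V) := by
  obtain ⟨a, b, hab, hor⟩ := hf
  intro hmem
  rw [hab, Sym2.mem_iff] at hmem
  have key : ∀ x y : V, Jc.J (vtx G x) = vtx G y → sig Jc (Sum.inl x) = Sum.inl y := by
    intro x y h
    exact sig_eq_of_J Jc _ _ 1 one_ne_zero (by rw [one_smul]; exact h)
  have key2 : ∀ x y : V, Jc.J (vtx G x) = vtx G y → sig Jc (Sum.inl y) = Sum.inl x := by
    intro x y h
    rw [← key x y h, sig_sig]
  rcases hmem with rfl | rfl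
  · rcases hor with h | h
    · rw [key v b h] at hv; exact Sum.inl_ne_inr hv
    · rw [key2 b v h] at hv; exact Sum.inl_ne_inr hv
  · rcases hor with h | h
    · rw [key2 a v h] at hv; exact Sum.inl_ne_inr hv
    · rw [key v a h] at hv; exact Sum.inl_ne_inr hv

end Series

/-- Let `J` be an adapted complex structure on a graph `G` with at
least one edge, and let `G_b` be the associated basic subgraph (whose edges are the
distinguished edges of `G`).  Then `J` is `3`-step nilpotent if and only if `G_b`
contains a component isomorphic to `A₂` whose isolated vertex (isolated in `G_b`, i.e.
lying on no distinguished edge, and sent by `J`, up to sign, to the distinguished edge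
of the copy) has positive degree in `G`. -/
theorem statement16 (G : SimpleGraph V) [DecidableRel G.Adj] (Jc : AdaptedCS G)
    (hE : G.edgeSet.Nonempty) :
    Jc.IsStepNilpotent 3 ↔
      ∃ (v : V) (e : G.edgeSet), Jc.Distinguished e ∧
        (Jc.J (vtx G v) = edg G e ∨ Jc.J (vtx G v) = - edg G e) ∧
        (∀ f : G.edgeSet, Jc.Distinguished f → v ∉ (f : Sym2 V)) ∧
        0 < G.degree v := by
  constructor
  · rintro ⟨h3, hlt⟩
    have h2 : aSeries Jc 2 ≠ Set.univ := hlt 2 (by norm_num)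
    obtain ⟨x, hx⟩ := (Set.ne_univ_iff_exists_notMem _).mp h2
    rw [aSeries_succ] at hx
    simp only [Set.mem_setOf_eq] at hx
    have hz : ∃ z : Niln G, (∀ i, z (Sum.inl i) = 0) ∧ z ∉ aSeries Jc 1 := by
      rcases not_and_or.mp hx with h | h
      · push_neg at h
        obtain ⟨y, hy⟩ := h
        exact ⟨bracket G x y, fun i => bracket_apply_inl _ _ _, hy⟩
      · push_neg at h
        obtain ⟨y, hy⟩ := h
        exact ⟨bracket G (Jc.J x) y, fun i => bracket_apply_inl _ _ _, hy⟩
    obtain ⟨z, hz0, hz1⟩ := hz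
    have hex : ∃ i, (∃ j, G.Adj i j) ∧ (Jc.J z) (Sum.inl i) ≠ 0 := by
      by_contra hcon
      push_neg at hcon
      exact hz1 (mem_a1 Jc hz0 (fun i j hij => hcon i ⟨j, hij⟩))
    obtain ⟨i, ⟨j, hij⟩, hne⟩ := hex
    rw [J_apply] at hne
    rcases hsi : sig Jc (Sum.inl i) with p | f
    · rw [hsi, hz0 p, mul_zero] at hne
      exact absurd rfl hne
    · refine ⟨i, f, distinguished_of_sig Jc hsi, ?_, fun f' hf' => factB Jc hsi f' hf', ?_⟩
      · have hJ := J_basis Jc (Sum.inl i)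
        rw [hsi] at hJ
        rcases eps_cases Jc (Sum.inl i) with h1 | h1
        · left
          rw [show vtx G i = basisVec G (Sum.inl i) from rfl, hJ, h1, one_smul]
          rfl
        · right
          rw [show vtx G i = basisVec G (Sum.inl i) from rfl, hJ, h1, neg_one_smul]
          rfl
      · exact (G.degree_pos_iff_exists_adj i).mpr ⟨j, hij⟩
  · rintro ⟨v, e, _, hJv, _, hdeg⟩
    have hsig : sig Jc (Sum.inl v) = Sum.inr e := by
      rcases hJv with h | h
      · exact sig_eq_of_J Jc _ _ 1 one_ne_zero (by rw [one_smul]; exact h)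
      · exact sig_eq_of_J Jc _ _ (-1) (by norm_num) (by rw [neg_one_smul]; exact h)
    obtain ⟨j, hvj⟩ := (G.degree_pos_iff_exists_adj v).mp hdeg
    refine ⟨a3_univ Jc, ?_⟩
    intro m hm
    interval_cases m
    · intro h
      have hmem := Set.eq_univ_iff_forall.mp h (vtx G v)
      rw [aSeries_zero] at hmem
      have h1 := congrFun (Set.mem_singleton_iff.mp hmem) (Sum.inl v)
      rw [vtx_apply_inl, if_pos rfl, Pi.zero_apply] at h1
      norm_num at h1
    · intro h
      have hmem := Set.eq_univ_iff_forall.mp h (vtx G v)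
      rw [aSeries_succ] at hmem
      have hb := Set.mem_singleton_iff.mp (hmem.1 (vtx G j))
      exact bracket_ne_zero hvj (by rw [vtx_apply_inl, if_pos rfl]; norm_num) hb
    · intro h
      obtain ⟨a, b, hadj, he⟩ := edge_repr e
      have hmem := Set.eq_univ_iff_forall.mp h (vtx G a)
      rw [aSeries_succ] at hmem
      have hz1 := hmem.1 (vtx G b)
      rw [aSeries_succ] at hz1
      have hb := Set.mem_singleton_iff.mp (hz1.2 (vtx G j))
      refine bracket_ne_zero hvj ?_ hb
      rw [J_apply, hsig]
      have hee : (⟨s(a, b), G.mem_edgeSet.mpr hadj⟩ : G.edgeSet) = e := Subtype.ext he.symm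
      have hzval : bracket G (vtx G a) (vtx G b) (Sum.inr e) = (if a < b then (1:ℝ) else -1) := by
        rw [show bracket G (vtx G a) (vtx G b) = bracketVtx G a b from bracket_vtx_vtx a b,
          bracketVtx_adj hadj, hee, Pi.smul_apply, edg_apply_inr, if_pos rfl, smul_eq_mul,
          mul_one]
      rw [hzval]
      have hen := eps_ne Jc (Sum.inr e)
      split_ifs <;> simp [hen]

end GraphLie
end

section
/- Let G be a finite simple graph with vertices v_1, …, v_n and let k = (k_1, …, k_n) be a vector of positive even integers. Then the k-blow-up G^{(k)} admits an adapted complex structure with no distinguished edges (equivalently, whose associated basic subgraph is a disjoint union of copies of A₁). -/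
/-!  Framework: the 2-step nilpotent Lie algebra `𝔫_G` associated to a finite simple
graph `G` (Dani–Mainkar construction), and adapted complex structures on it. -/

open scoped BigOperators

set_option linter.unusedSectionVars false
namespace GraphLie

section Construction


lemma pi_single_ne {I : Type*} (inst : DecidableEq I) {i j : I} (h : j ≠ i) (x : ℝ) :
    @Pi.single I (fun _ => ℝ) _ inst i x j = 0 := by
  have he : inst = Classical.decEq I := Subsingleton.elim _ _
  subst he
  exact @Pi.single_eq_of_ne I (fun _ => ℝ) _ (Classical.decEq I) _ _ h x

lemma pi_single_same {I : Type*} (inst : DecidableEq I) (i : I) (x : ℝ) :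
    @Pi.single I (fun _ => ℝ) _ inst i x i = x := by
  have he : inst = Classical.decEq I := Subsingleton.elim _ _
  subst he
  exact @Pi.single_eq_same I (fun _ => ℝ) _ (Classical.decEq I) i x

variable {m : ℕ}

/-- sign of an ordered pair of vertices -/
noncomputable def sgn (a b : Fin m) : ℝ := if a < b then 1 else -1

variable {n : ℕ} (c : Fin m → Fin n) (σ : Fin m → Fin m)

noncomputable def eta (a : Fin m) : ℝ := if a < σ a then 1 else -1

lemma sgn_swap {a b : Fin m} (h : a ≠ b) : sgn b a = -sgn a b := by
  unfold sgn
  rcases h.lt_or_gt with hl | hl <;> simp [hl, hl.not_gt]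

lemma sgn_sq (a b : Fin m) : sgn a b * sgn a b = 1 := by
  unfold sgn; split_ifs <;> norm_num

lemma eta_sigma (hσ : Function.Involutive σ) (hne : ∀ a, σ a ≠ a) (a : Fin m) :
    eta σ (σ a) = -eta σ a := by
  unfold eta
  rw [hσ a]
  rcases (hne a).lt_or_gt with h | h <;> simp [h, h.not_gt]

noncomputable def tauFun (a b : Fin m) : Sym2 (Fin m) :=
  if c a < c b then s(σ a, b) else if c b < c a then s(a, σ b) else s(a, b)

lemma tauFun_symm (a b : Fin m) : tauFun c σ a b = tauFun c σ b a := by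
  unfold tauFun
  rcases lt_trichotomy (c a) (c b) with h | h | h
  · simp [h, not_lt.mpr h.le, Sym2.eq_swap]
  · simp [h, lt_irrefl, Sym2.eq_swap]
  · simp [h, not_lt.mpr h.le, Sym2.eq_swap]

noncomputable def tau : Sym2 (Fin m) → Sym2 (Fin m) :=
  Sym2.lift ⟨fun a b => tauFun c σ a b, tauFun_symm c σ⟩

@[simp] lemma tau_mk (a b : Fin m) : tau c σ s(a, b) = tauFun c σ a b := rfl

noncomputable def muFun (a b : Fin m) : ℝ :=
  if c a < c b then -eta σ (σ a) * sgn (σ a) b * sgn a b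
  else if c b < c a then -eta σ (σ b) * sgn (σ b) a * sgn b a
  else 1

lemma muFun_symm (a b : Fin m) : muFun c σ a b = muFun c σ b a := by
  unfold muFun
  rcases lt_trichotomy (c a) (c b) with h | h | h
  · simp [h, not_lt.mpr h.le]
  · simp [h, lt_irrefl]
  · simp [h, not_lt.mpr h.le]

noncomputable def muE : Sym2 (Fin m) → ℝ :=
  Sym2.lift ⟨fun a b => muFun c σ a b, muFun_symm c σ⟩

@[simp] lemma muE_mk (a b : Fin m) : muE c σ s(a, b) = muFun c σ a b := rfl

lemma tau_invol (hσ : Function.Involutive σ) (hc : ∀ a, c (σ a) = c a) :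
    ∀ e : Sym2 (Fin m), tau c σ (tau c σ e) = e := by
  intro e
  induction e using Sym2.ind with
  | _ a b =>
    rcases lt_trichotomy (c a) (c b) with h | h | h
    · have h1 : tauFun c σ a b = s(σ a, b) := by simp [tauFun, h]
      rw [tau_mk, h1, tau_mk]
      have : c (σ a) < c b := by rw [hc]; exact h
      simp [tauFun, this, hσ a]
    · have h1 : tauFun c σ a b = s(a, b) := by simp [tauFun, h]
      rw [tau_mk, h1, tau_mk, h1]
    · have h1 : tauFun c σ a b = s(a, σ b) := by simp [tauFun, h, not_lt.mpr h.le]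
      rw [tau_mk, h1, tau_mk]
      have h2 : c (σ b) < c a := by rw [hc]; exact h
      simp [tauFun, h2, not_lt.mpr h2.le, hσ b]

variable (H : SimpleGraph (Fin m)) [DecidableRel H.Adj]

lemma tau_mem (hc : ∀ a, c (σ a) = c a)
    {nG : SimpleGraph (Fin n)}
    (hH : ∀ a b : Fin m, H.Adj a b ↔ nG.Adj (c a) (c b))
    {e : Sym2 (Fin m)} (he : e ∈ H.edgeSet) : tau c σ e ∈ H.edgeSet := by
  induction e using Sym2.ind with
  | _ a b =>
    rw [SimpleGraph.mem_edgeSet] at he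
    rcases lt_trichotomy (c a) (c b) with h | h | h
    · have h1 : tau c σ s(a,b) = s(σ a, b) := by simp [tauFun, h]
      rw [h1, SimpleGraph.mem_edgeSet, hH, hc]
      exact (hH a b).mp he
    · have h1 : tau c σ s(a,b) = s(a, b) := by simp [tauFun, h]
      rw [h1]; exact he
    · have h1 : tau c σ s(a,b) = s(a, σ b) := by simp [tauFun, h, not_lt.mpr h.le]
      rw [h1, SimpleGraph.mem_edgeSet, hH, hc]
      exact (hH a b).mp he

variable {nG : SimpleGraph (Fin n)}

/-- the signed permutation of the basis -/
noncomputable def qb (hc : ∀ a, c (σ a) = c a)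
    (hH : ∀ a b : Fin m, H.Adj a b ↔ nG.Adj (c a) (c b)) :
    (Fin m ⊕ H.edgeSet) → (Fin m ⊕ H.edgeSet)
  | .inl a => .inl (σ a)
  | .inr e => .inr ⟨tau c σ e, tau_mem c σ H hc hH e.2⟩

noncomputable def mub : (Fin m ⊕ H.edgeSet) → ℝ
  | .inl a => eta σ a
  | .inr e => muE c σ e

variable (hc : ∀ a, c (σ a) = c a)
  (hH : ∀ a b : Fin m, H.Adj a b ↔ nG.Adj (c a) (c b))

lemma qb_invol (hσ : Function.Involutive σ) (b : Fin m ⊕ H.edgeSet) :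
    qb c σ H hc hH (qb c σ H hc hH b) = b := by
  cases b with
  | inl a => simp [qb, hσ a]
  | inr e => exact congrArg Sum.inr (Subtype.ext (tau_invol c σ hσ hc e.1))

/-- The complex structure as a linear map. -/
noncomputable def Jmap : Niln H →ₗ[ℝ] Niln H where
  toFun x := fun b => mub c σ H (qb c σ H hc hH b) * x (qb c σ H hc hH b)
  map_add' x y := by funext b; simp [mul_add]
  map_smul' r x := by funext b; simp [smul_eq_mul]; ring

lemma Jmap_basis (hσ : Function.Involutive σ) (b : Fin m ⊕ H.edgeSet) :
    Jmap c σ H hc hH (basisVec H b) = mub c σ H b • basisVec H (qb c σ H hc hH b) := by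
  funext b'
  simp only [Jmap, LinearMap.coe_mk, AddHom.coe_mk, basisVec, Pi.smul_apply,
    smul_eq_mul]
  by_cases hb : b' = qb c σ H hc hH b
  · subst hb
    rw [qb_invol c σ H hc hH hσ, pi_single_same _ _ _, pi_single_same _ _ _]
  · have h2 : qb c σ H hc hH b' ≠ b := by
      intro h
      apply hb
      rw [← h, qb_invol c σ H hc hH hσ]
    rw [pi_single_ne _ h2, pi_single_ne _ hb, mul_zero, mul_zero]

lemma mu_mul (hσ : Function.Involutive σ) (hne : ∀ a, σ a ≠ a)
    (b : Fin m ⊕ H.edgeSet) :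
    mub c σ H b * mub c σ H (qb c σ H hc hH b) = -1 := by
  cases b with
  | inl a =>
    show eta σ a * eta σ (σ a) = -1
    rw [eta_sigma σ hσ hne a]
    unfold eta; split_ifs <;> norm_num
  | inr e =>
    obtain ⟨e, he⟩ := e
    show muE c σ e * muE c σ (tau c σ e) = -1
    induction e using Sym2.ind with
    | _ a b =>
      rw [SimpleGraph.mem_edgeSet] at he
      have hcc : c a ≠ c b := ((hH a b).mp he).ne
      rcases hcc.lt_or_gt with h | h
      · have t1 : tau c σ s(a, b) = s(σ a, b) := by simp [tauFun, h]
        have hc2 : c (σ a) < c b := by rw [hc]; exact h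
        rw [t1, muE_mk, muE_mk]
        unfold muFun
        rw [if_pos h, if_pos hc2, hσ a, eta_sigma σ hσ hne a]
        unfold eta sgn; split_ifs <;> ring
      · have t1 : tau c σ s(a, b) = s(a, σ b) := by
          simp [tauFun, h, not_lt.mpr h.le]
        have hc2 : c (σ b) < c a := by rw [hc]; exact h
        rw [t1, muE_mk, muE_mk]
        unfold muFun
        rw [if_neg (not_lt.mpr h.le), if_pos h, if_neg (not_lt.mpr hc2.le),
          if_pos hc2, hσ b, eta_sigma σ hσ hne b]
        unfold eta sgn; split_ifs <;> ring

lemma Jmap_squared (hσ : Function.Involutive σ) (hne : ∀ a, σ a ≠ a)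
    (x : Niln H) :
    Jmap c σ H hc hH (Jmap c σ H hc hH x) = -x := by
  funext b
  show mub c σ H (qb c σ H hc hH b) *
      (mub c σ H (qb c σ H hc hH (qb c σ H hc hH b)) *
        x (qb c σ H hc hH (qb c σ H hc hH b))) = -x b
  rw [qb_invol c σ H hc hH hσ b]
  have := mu_mul c σ H hc hH hσ hne b
  linear_combination x b * this

lemma mub_pm (b : Fin m ⊕ H.edgeSet) :
    mub c σ H b = 1 ∨ mub c σ H b = -1 := by
  cases b with
  | inl a =>
    show eta σ a = 1 ∨ eta σ a = -1
    unfold eta; split_ifs <;> simp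
  | inr e =>
    obtain ⟨e, he⟩ := e
    show muE c σ e = 1 ∨ muE c σ e = -1
    induction e using Sym2.ind with
    | _ a b =>
      rw [muE_mk]
      unfold muFun eta sgn
      split_ifs <;> norm_num

lemma Jmap_adapted (hσ : Function.Involutive σ) (b : Fin m ⊕ H.edgeSet) :
    (∃ b', Jmap c σ H hc hH (basisVec H b) = basisVec H b') ∨
      (∃ b', Jmap c σ H hc hH (basisVec H b) = - basisVec H b') := by
  rcases mub_pm c σ H b with h | h
  · left
    exact ⟨qb c σ H hc hH b, by rw [Jmap_basis c σ H hc hH hσ, h, one_smul]⟩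
  · right
    exact ⟨qb c σ H hc hH b, by
      rw [Jmap_basis c σ H hc hH hσ, h, neg_smul, one_smul]⟩

lemma edg_congr {e₁ e₂ : H.edgeSet} (h : (e₁ : Sym2 (Fin m)) = e₂) :
    edg H e₁ = edg H e₂ := by
  cases Subtype.ext h
  rfl

lemma bracketVtx_adj_s18 {i j : Fin m} (h : H.Adj i j) :
    bracketVtx H i j = sgn i j • edg H ⟨s(i, j), H.mem_edgeSet.mpr h⟩ := by
  unfold bracketVtx sgn
  rw [dif_pos h]
  split_ifs
  · rw [one_smul]
  · rw [neg_smul, one_smul]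

lemma bracketVtx_not_adj_s18 {i j : Fin m} (h : ¬ H.Adj i j) :
    bracketVtx H i j = 0 := dif_neg h

lemma Jmap_edg (hσ : Function.Involutive σ) (e : H.edgeSet) :
    Jmap c σ H hc hH (edg H e) =
      muE c σ (e : Sym2 (Fin m)) •
        edg H ⟨tau c σ (e : Sym2 (Fin m)), tau_mem c σ H hc hH e.2⟩ :=
  Jmap_basis c σ H hc hH hσ (Sum.inr e)

lemma key (hσ : Function.Involutive σ) (hne : ∀ a, σ a ≠ a) (i j : Fin m) :
    bracketVtx H i j
      + Jmap c σ H hc hH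
          (eta σ i • bracketVtx H (σ i) j + eta σ j • bracketVtx H i (σ j))
      - (eta σ i * eta σ j) • bracketVtx H (σ i) (σ j) = 0 := by
  by_cases hij : H.Adj i j
  · have hGij : nG.Adj (c i) (c j) := (hH i j).mp hij
    have hcc : c i ≠ c j := hGij.ne
    have hadj1 : H.Adj (σ i) j := by rw [hH, hc]; exact hGij
    have hadj2 : H.Adj i (σ j) := by rw [hH, hc]; exact hGij
    have hadj3 : H.Adj (σ i) (σ j) := by rw [hH, hc, hc]; exact hGij
    rw [bracketVtx_adj_s18 H hij, bracketVtx_adj_s18 H hadj1, bracketVtx_adj_s18 H hadj2,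
      bracketVtx_adj_s18 H hadj3, smul_comm (eta σ i), smul_comm (eta σ j),
      map_add, map_smul, map_smul, map_smul, map_smul,
      Jmap_edg c σ H hc hH hσ, Jmap_edg c σ H hc hH hσ]
    rcases hcc.lt_or_gt with h | h
    · have hc1 : c (σ i) < c j := by rw [hc]; exact h
      have hc2 : c i < c (σ j) := by rw [hc]; exact h
      have t1 : tau c σ (s(σ i, j) : Sym2 (Fin m)) = s(i, j) := by
        simp [tauFun, hc1, hσ i]
      have t2 : tau c σ (s(i, σ j) : Sym2 (Fin m)) = s(σ i, σ j) := by
        simp [tauFun, hc2]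
      have m1 : muE c σ (s(σ i, j) : Sym2 (Fin m))
          = -eta σ i * sgn i j * sgn (σ i) j := by
        rw [muE_mk]; unfold muFun; rw [if_pos hc1, hσ i]
      have m2 : muE c σ (s(i, σ j) : Sym2 (Fin m))
          = eta σ i * sgn (σ i) (σ j) * sgn i (σ j) := by
        rw [muE_mk]; unfold muFun
        rw [if_pos hc2, eta_sigma σ hσ hne i]; ring
      rw [edg_congr H
          (e₁ := ⟨tau c σ (s(σ i, j) : Sym2 (Fin m)),
            tau_mem c σ H hc hH (H.mem_edgeSet.mpr hadj1)⟩)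
          (e₂ := ⟨s(i, j), H.mem_edgeSet.mpr hij⟩) t1,
        edg_congr H
          (e₁ := ⟨tau c σ (s(i, σ j) : Sym2 (Fin m)),
            tau_mem c σ H hc hH (H.mem_edgeSet.mpr hadj2)⟩)
          (e₂ := ⟨s(σ i, σ j), H.mem_edgeSet.mpr hadj3⟩) t2, m1, m2]
      match_scalars <;> (unfold sgn eta; split_ifs <;> ring)
    · have hc1 : c j < c (σ i) := by rw [hc]; exact h
      have hc2 : c (σ j) < c i := by rw [hc]; exact h
      have hne1 : σ i ≠ σ j := fun hh => hcc (by rw [← hc i, ← hc j, hh])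
      have hne2 : σ i ≠ j := fun hh => hcc (by rw [← hc i, hh])
      have hne3 : i ≠ σ j := fun hh => hcc (by rw [← hc j, ← hh])
      have hne4 : i ≠ j := fun hh => hcc (by rw [hh])
      have t1 : tau c σ (s(σ i, j) : Sym2 (Fin m)) = s(σ i, σ j) := by
        simp [tauFun, hc1, not_lt.mpr hc1.le]
      have t2 : tau c σ (s(i, σ j) : Sym2 (Fin m)) = s(i, j) := by
        simp [tauFun, hc2, not_lt.mpr hc2.le, hσ j]
      have m1 : muE c σ (s(σ i, j) : Sym2 (Fin m))
          = eta σ j * sgn (σ i) (σ j) * sgn (σ i) j := by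
        rw [muE_mk]; unfold muFun
        rw [if_neg (not_lt.mpr hc1.le), if_pos hc1, eta_sigma σ hσ hne j,
          sgn_swap hne1, sgn_swap hne2]; ring
      have m2 : muE c σ (s(i, σ j) : Sym2 (Fin m))
          = -eta σ j * sgn i j * sgn i (σ j) := by
        rw [muE_mk]; unfold muFun
        rw [if_neg (not_lt.mpr hc2.le), if_pos hc2, hσ j, sgn_swap hne4,
          sgn_swap hne3]; ring
      rw [edg_congr H
          (e₁ := ⟨tau c σ (s(σ i, j) : Sym2 (Fin m)),
            tau_mem c σ H hc hH (H.mem_edgeSet.mpr hadj1)⟩)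
          (e₂ := ⟨s(σ i, σ j), H.mem_edgeSet.mpr hadj3⟩) t1,
        edg_congr H
          (e₁ := ⟨tau c σ (s(i, σ j) : Sym2 (Fin m)),
            tau_mem c σ H hc hH (H.mem_edgeSet.mpr hadj2)⟩)
          (e₂ := ⟨s(i, j), H.mem_edgeSet.mpr hij⟩) t2, m1, m2]
      match_scalars <;> (unfold sgn eta; split_ifs <;> ring)
  · have key0 : ¬ nG.Adj (c i) (c j) := fun hG => hij ((hH i j).mpr hG)
    have h1 : ¬ H.Adj (σ i) j := by rw [hH, hc]; exact key0
    have h2 : ¬ H.Adj i (σ j) := by rw [hH, hc]; exact key0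
    have h3 : ¬ H.Adj (σ i) (σ j) := by rw [hH, hc, hc]; exact key0
    rw [bracketVtx_not_adj_s18 H hij, bracketVtx_not_adj_s18 H h1,
      bracketVtx_not_adj_s18 H h2, bracketVtx_not_adj_s18 H h3]
    simp

lemma Jmap_apply_inl (x : Niln H) (i : Fin m) :
    Jmap c σ H hc hH x (Sum.inl i) = eta σ (σ i) * x (Sum.inl (σ i)) := rfl

lemma bracket_Jleft (hσ : Function.Involutive σ) (x y : Niln H) :
    bracket H (Jmap c σ H hc hH x) y
      = ∑ i : Fin m, ∑ j : Fin m,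
          (eta σ i * (x (Sum.inl i) * y (Sum.inl j))) • bracketVtx H (σ i) j := by
  unfold bracket
  refine (Fintype.sum_bijective σ hσ.bijective _ _ fun i => ?_).symm
  refine Finset.sum_congr rfl fun j _ => ?_
  rw [Jmap_apply_inl, hσ i]
  congr 1
  ring

lemma bracket_Jright (hσ : Function.Involutive σ) (x y : Niln H) :
    bracket H x (Jmap c σ H hc hH y)
      = ∑ i : Fin m, ∑ j : Fin m,
          (eta σ j * (x (Sum.inl i) * y (Sum.inl j))) • bracketVtx H i (σ j) := by
  unfold bracket
  refine Finset.sum_congr rfl fun i _ => ?_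
  refine (Fintype.sum_bijective σ hσ.bijective _ _ fun j => ?_).symm
  rw [Jmap_apply_inl, hσ j]
  congr 1
  ring

lemma bracket_Jboth (hσ : Function.Involutive σ) (x y : Niln H) :
    bracket H (Jmap c σ H hc hH x) (Jmap c σ H hc hH y)
      = ∑ i : Fin m, ∑ j : Fin m,
          ((eta σ i * eta σ j) * (x (Sum.inl i) * y (Sum.inl j))) •
            bracketVtx H (σ i) (σ j) := by
  rw [bracket_Jleft c σ H hc hH hσ]
  refine Finset.sum_congr rfl fun i _ => ?_
  refine (Fintype.sum_bijective σ hσ.bijective _ _ fun j => ?_).symm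
  rw [Jmap_apply_inl, hσ j]
  congr 1
  ring

lemma Jmap_integrable (hσ : Function.Involutive σ) (hne : ∀ a, σ a ≠ a)
    (x y : Niln H) :
    bracket H x y
      + Jmap c σ H hc hH
          (bracket H (Jmap c σ H hc hH x) y + bracket H x (Jmap c σ H hc hH y))
      - bracket H (Jmap c σ H hc hH x) (Jmap c σ H hc hH y) = 0 := by
  rw [bracket_Jleft c σ H hc hH hσ, bracket_Jright c σ H hc hH hσ,
    bracket_Jboth c σ H hc hH hσ, map_add]
  unfold bracket
  simp only [map_sum, map_smul]
  simp only [← Finset.sum_add_distrib, ← Finset.sum_sub_distrib]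
  refine Finset.sum_eq_zero fun i _ => Finset.sum_eq_zero fun j _ => ?_
  have hT := key c σ H hc hH hσ hne i j
  rw [map_add, map_smul, map_smul] at hT
  calc (x (Sum.inl i) * y (Sum.inl j)) • bracketVtx H i j
        + ((eta σ i * (x (Sum.inl i) * y (Sum.inl j))) •
            Jmap c σ H hc hH (bracketVtx H (σ i) j)
          + (eta σ j * (x (Sum.inl i) * y (Sum.inl j))) •
            Jmap c σ H hc hH (bracketVtx H i (σ j)))
        - ((eta σ i * eta σ j) * (x (Sum.inl i) * y (Sum.inl j))) •
            bracketVtx H (σ i) (σ j)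
      = (x (Sum.inl i) * y (Sum.inl j)) •
          (bracketVtx H i j
            + (eta σ i • Jmap c σ H hc hH (bracketVtx H (σ i) j)
              + eta σ j • Jmap c σ H hc hH (bracketVtx H i (σ j)))
            - (eta σ i * eta σ j) • bracketVtx H (σ i) (σ j)) := by
        module
    _ = 0 := by rw [hT, smul_zero]

lemma Jmap_vtx_eq (hσ : Function.Involutive σ) {v w : Fin m}
    (h : Jmap c σ H hc hH (vtx H v) = vtx H w) : c w = c v := by
  have hb : vtx H v = basisVec H (Sum.inl v) := rfl
  rw [hb, Jmap_basis c σ H hc hH hσ] at h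
  have h2 := congrFun h (Sum.inl (σ v))
  simp only [Pi.smul_apply, smul_eq_mul, basisVec, vtx, qb, mub] at h2
  rw [pi_single_same] at h2
  by_cases hw : (Sum.inl (σ v) : Fin m ⊕ H.edgeSet) = Sum.inl w
  · have : σ v = w := by injection hw
    rw [← this, hc]
  · rw [pi_single_ne _ hw] at h2
    unfold eta at h2
    split_ifs at h2 <;> norm_num at h2

end Construction

end GraphLie

namespace GraphLie

/-- Let `G` be a graph with vertices `v_1, …, v_n` and let
`k = (k_1, …, k_n)` be a vector of positive even integers.  Then the `k`-blow-up
`G^{(k)}` (a graph `H` whose vertices are distributed into blocks by a map `c`, the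
block of `v_i` having `k_i` elements, two vertices being adjacent iff their blocks are
adjacent in `G`) admits an adapted complex structure with no distinguished edges. -/
theorem statement18 (n : ℕ) (G : SimpleGraph (Fin n)) [DecidableRel G.Adj]
    (k : Fin n → ℕ) (hpos : ∀ i, 0 < k i) (heven : ∀ i, Even (k i))
    (m : ℕ) (c : Fin m → Fin n)
    (hfib : ∀ i, (Finset.univ.filter fun a => c a = i).card = k i)
    (H : SimpleGraph (Fin m)) [DecidableRel H.Adj]
    (hH : ∀ a b : Fin m, H.Adj a b ↔ G.Adj (c a) (c b)) :
    ∃ Jc : AdaptedCS H, ∀ e : H.edgeSet, ¬ Jc.Distinguished e := by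
  classical
  have hcard : ∀ i : Fin n, Fintype.card {a : Fin m // c a = i} = k i := by
    intro i
    rw [Fintype.card_subtype]
    exact hfib i
  let E : ∀ i : Fin n, {a : Fin m // c a = i} ≃ Fin (k i) :=
    fun i => Fintype.equivFinOfCardEq (hcard i)
  let σ : Fin m → Fin m :=
    fun a => ((E (c a)).symm (Fin.rev (E (c a) ⟨a, rfl⟩))).val
  have hc : ∀ a, c (σ a) = c a :=
    fun a => ((E (c a)).symm (Fin.rev (E (c a) ⟨a, rfl⟩))).2
  have haux : ∀ (i : Fin n) (x : {a : Fin m // c a = i}),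
      σ x.val = ((E i).symm (Fin.rev (E i x))).val := by
    rintro i ⟨a, ha⟩
    subst ha
    rfl
  have hσ : Function.Involutive σ := by
    intro a
    have h2 := haux (c a) ((E (c a)).symm (Fin.rev (E (c a) ⟨a, rfl⟩)))
    show σ (σ a) = a
    rw [show σ a = ((E (c a)).symm (Fin.rev (E (c a) ⟨a, rfl⟩))).val from rfl, h2,
      Equiv.apply_symm_apply, Fin.rev_rev, Equiv.symm_apply_apply]
  have hne : ∀ a, σ a ≠ a := by
    intro a h
    have hx : ((E (c a)).symm (Fin.rev (E (c a) ⟨a, rfl⟩)) : {x // c x = c a})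
        = ⟨a, rfl⟩ := Subtype.ext h
    have h3 := congrArg (E (c a)) hx
    rw [Equiv.apply_symm_apply] at h3
    have hv := congrArg Fin.val h3
    rw [Fin.val_rev] at hv
    obtain ⟨r, hr⟩ := heven (c a)
    have hlt := (E (c a) ⟨a, rfl⟩).isLt
    omega
  refine ⟨{ J := Jmap c σ H hc hH
          , j_squared := Jmap_squared c σ H hc hH hσ hne
          , integrable := Jmap_integrable c σ H hc hH hσ hne
          , adapted := Jmap_adapted c σ H hc hH hσ }, ?_⟩
  rintro e ⟨v, w, hvw, hcase⟩
  have hadj : H.Adj v w := by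
    have h2 := e.2
    rw [hvw] at h2
    exact H.mem_edgeSet.mp h2
  have hcc : c v ≠ c w := ((hH v w).mp hadj).ne
  rcases hcase with h | h
  · exact hcc (Jmap_vtx_eq c σ H hc hH hσ h).symm
  · exact hcc (Jmap_vtx_eq c σ H hc hH hσ h)

end GraphLie
end
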